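/- arXiv:1708.02268 — 3 statements merged into one kernel-verified Lean document; each statement's English description precedes it below -/
import Mathlib

section
/- Every fraction of the form p²/(pq−1) with p > q ≥ 1 coprime admits a Hirzebruch–Jung continued fraction expansion [b_1,...,b_ℓ] obtained from [4] by a finite sequence of the operations L and R. -/
/-!
With `M(b) = hjMatrix b = !![b, -1; 1, 0]`, the value of `[b₁,…,b_ℓ]` is `P 0 0 / P 1 0` for the
continuant matrix `P = hjProd [b₁,…,b_ℓ] = M(b₁)⋯M(b_ℓ)`, as long as every `bᵢ ≥ 2` (this keeps
all denominators positive). Since `M(b+1) = M(b) * !![1, 0; -1, 1] = !![1, 1; 0, 1] * M(b)`, the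
operations `L` and `R` act on `P` by multiplying with fixed matrices on both sides. The matrix
`T(p, q) = tStringMatrix p q = !![p², 1 - p(p-q); pq - 1, 1 - q(p-q)]` satisfies
`T(2, 1) = M(4)`, `T(p, q) = M(2) * T(q, 2q - p) * !![1, 0; -1, 1]` and
`T(p, q) = !![1, 1; 0, 1] * T(p - q, q) * M(2)`. The first step applies when `p < 2q`, the second
when `p > 2q`; both decrease `p` and keep the pair coprime, and `p = 2q` forces `(p, q) = (2, 1)`.
So by induction every `T(p, q)` is the continuant matrix of a T-string, whose value is then
`p² / (pq - 1)`.
-/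

/-- Value of a negative (Hirzebruch–Jung) continued fraction
`b₁ - 1/(b₂ - 1/(b₃ - ⋯))`, with the convention `hjVal [] = 0`. -/
def hjVal : List ℚ → ℚ
  | [] => 0
  | b :: t => b - (hjVal t)⁻¹

/-- The operation `L[b₁,…,b_ℓ] = [2, b₁, …, b_{ℓ-1}, b_ℓ + 1]`. -/
def Lop (l : List ℤ) : List ℤ := 2 :: (l.dropLast ++ [l.getLast! + 1])

/-- The operation `R[b₁,…,b_ℓ] = [b₁+1, b₂, …, b_ℓ, 2]`. -/
def Rop : List ℤ → List ℤ
  | [] => []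
  | a :: t => (a + 1) :: (t ++ [2])

/-- T-strings: generated from `[4]` by the operations `L` and `R`. -/
inductive TString : List ℤ → Prop
  | base : TString [4]
  | left {l : List ℤ} : TString l → TString (Lop l)
  | right {l : List ℤ} : TString l → TString (Rop l)

def hjMatrix (b : ℤ) : Matrix (Fin 2) (Fin 2) ℤ := !![b, -1; 1, 0]

def hjProd (l : List ℤ) : Matrix (Fin 2) (Fin 2) ℤ := (l.map hjMatrix).prod

@[simp]
lemma hjProd_nil : hjProd [] = 1 := rfl

@[simp]
lemma hjProd_cons (b : ℤ) (l : List ℤ) : hjProd (b :: l) = hjMatrix b * hjProd l := rfl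

@[simp]
lemma hjProd_append (l l' : List ℤ) : hjProd (l ++ l') = hjProd l * hjProd l' := by
  simp [hjProd]

lemma hjMatrix_add_one_eq_mul_right (b : ℤ) :
    hjMatrix (b + 1) = hjMatrix b * !![1, 0; -1, 1] := by
  ext i j; fin_cases i <;> fin_cases j <;> simp [hjMatrix]

lemma hjMatrix_add_one_eq_mul_left (b : ℤ) :
    hjMatrix (b + 1) = !![1, 1; 0, 1] * hjMatrix b := by
  ext i j; fin_cases i <;> fin_cases j <;> simp [hjMatrix]

lemma hjProd_Lop {l : List ℤ} (hl : l ≠ []) :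
    hjProd (Lop l) = hjMatrix 2 * hjProd l * !![1, 0; -1, 1] := by
  obtain ⟨t, x, rfl⟩ := (List.eq_nil_or_concat' l).resolve_left hl
  simp [Lop, hjMatrix_add_one_eq_mul_right, Matrix.mul_assoc]

lemma hjProd_Rop {l : List ℤ} (hl : l ≠ []) :
    hjProd (Rop l) = !![1, 1; 0, 1] * hjProd l * hjMatrix 2 := by
  obtain ⟨a, t, rfl⟩ := List.exists_cons_of_ne_nil hl
  simp [Rop, hjMatrix_add_one_eq_mul_left, Matrix.mul_assoc]

lemma hjProd_cons_zero_zero (b : ℤ) (l : List ℤ) :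
    hjProd (b :: l) 0 0 = b * hjProd l 0 0 - hjProd l 1 0 := by
  simp [hjMatrix, Matrix.mul_apply, sub_eq_add_neg]

lemma hjProd_cons_one_zero (b : ℤ) (l : List ℤ) : hjProd (b :: l) 1 0 = hjProd l 0 0 := by
  simp [hjMatrix, Matrix.mul_apply]

lemma hjProd_one_zero_mem_Ico {l : List ℤ} (hl : ∀ b ∈ l, 2 ≤ b) :
    hjProd l 1 0 ∈ Set.Ico 0 (hjProd l 0 0) := by
  induction l with
  | nil => simp
  | cons b t ih =>
    obtain ⟨hC, hCA⟩ := ih fun c hc => hl c (List.mem_cons_of_mem b hc)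
    have hb := hl b List.mem_cons_self
    rw [hjProd_cons_zero_zero, hjProd_cons_one_zero]
    constructor <;> nlinarith

lemma hjVal_eq_div {l : List ℤ} (hl : ∀ b ∈ l, 2 ≤ b) :
    hjVal (l.map ((↑) : ℤ → ℚ)) = (hjProd l 0 0 : ℚ) / hjProd l 1 0 := by
  induction l with
  | nil => simp [hjVal]
  | cons b t ih =>
    have ht : ∀ c ∈ t, 2 ≤ c := fun c hc => hl c (List.mem_cons_of_mem b hc)
    have hA : (hjProd t 0 0 : ℚ) ≠ 0 := by
      obtain ⟨hC, hCA⟩ := hjProd_one_zero_mem_Ico ht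
      exact_mod_cast (hC.trans_lt hCA).ne'
    rw [List.map_cons, hjVal, ih ht, inv_div, hjProd_cons_zero_zero, hjProd_cons_one_zero]
    push_cast
    field_simp

lemma TString.ne_nil {l : List ℤ} (h : TString l) : l ≠ [] := by
  induction h with
  | base => simp
  | left => simp [Lop]
  | right _ ih =>
    obtain ⟨a, t, rfl⟩ := List.exists_cons_of_ne_nil ih
    simp [Rop]

lemma TString.two_le {l : List ℤ} (h : TString l) : ∀ b ∈ l, 2 ≤ b := by
  induction h with
  | base => simp
  | @left l hT ih =>
    obtain ⟨t, x, rfl⟩ := (List.eq_nil_or_concat' l).resolve_left hT.ne_nil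
    have hx := ih x (by simp)
    simp only [Lop, List.dropLast_concat, List.getLast!_eq_getLast?_getD, List.getLast?_concat,
      Option.getD_some, List.mem_cons, List.mem_append, List.not_mem_nil, or_false]
    rintro b (rfl | hb | rfl)
    · exact le_rfl
    · exact ih b (by simp [hb])
    · omega
  | @right l hT ih =>
    obtain ⟨a, t, rfl⟩ := List.exists_cons_of_ne_nil hT.ne_nil
    have ha := ih a (by simp)
    simp only [Rop, List.mem_cons, List.mem_append, List.not_mem_nil, or_false]
    rintro b (rfl | hb | rfl)
    · omega
    · exact ih b (by simp [hb])
    · exact le_rfl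

def tStringMatrix (p q : ℤ) : Matrix (Fin 2) (Fin 2) ℤ :=
  !![p ^ 2, 1 - p * (p - q); p * q - 1, 1 - q * (p - q)]

lemma tStringMatrix_two_one : tStringMatrix 2 1 = hjMatrix 4 := by
  ext i j; fin_cases i <;> fin_cases j <;> simp [tStringMatrix, hjMatrix]

lemma tStringMatrix_eq_hjMatrix_two_mul_mul (p q : ℤ) :
    tStringMatrix p q = hjMatrix 2 * tStringMatrix q (2 * q - p) * !![1, 0; -1, 1] := by
  ext i j
  fin_cases i <;> fin_cases j <;> simp [tStringMatrix, hjMatrix, -mul_eq_mul_left_iff] <;> ring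

lemma tStringMatrix_eq_mul_mul_hjMatrix_two (p q : ℤ) :
    tStringMatrix p q = !![1, 1; 0, 1] * tStringMatrix (p - q) q * hjMatrix 2 := by
  ext i j
  fin_cases i <;> fin_cases j <;> simp [tStringMatrix, hjMatrix, -mul_eq_mul_left_iff] <;> ring

lemma exists_tString_hjProd_eq_tStringMatrix (p q : ℕ) (hq : 1 ≤ q) (hqp : q < p)
    (hco : p.Coprime q) : ∃ l, TString l ∧ hjProd l = tStringMatrix p q := by
  induction p using Nat.strong_induction_on generalizing q with
  | _ p ih =>
  rcases lt_trichotomy p (2 * q) with h | rfl | h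
  · have hco' : q.Coprime (2 * q - p) := by
      rw [show 2 * q - p = q - (p - q) by omega, Nat.coprime_self_sub_right (by omega),
        Nat.coprime_sub_self_right hqp.le, Nat.coprime_comm]
      exact hco
    obtain ⟨l, hT, hl⟩ := ih q hqp (2 * q - p) (by omega) (by omega) hco'
    refine ⟨Lop l, hT.left, ?_⟩
    rw [tStringMatrix_eq_hjMatrix_two_mul_mul p, hjProd_Lop hT.ne_nil, hl]
    push_cast [show p ≤ 2 * q by omega]
    rfl
  · obtain rfl : q = 1 := Nat.Coprime.eq_one_of_dvd hco.symm (dvd_mul_left q 2)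
    exact ⟨[4], .base, by simp [tStringMatrix_two_one]⟩
  · have hco' : (p - q).Coprime q := (Nat.coprime_sub_self_left hqp.le).2 hco
    obtain ⟨l, hT, hl⟩ := ih (p - q) (by omega) q hq (by omega) hco'
    refine ⟨Rop l, hT.right, ?_⟩
    rw [tStringMatrix_eq_mul_mul_hjMatrix_two p, hjProd_Rop hT.ne_nil, hl]
    push_cast [hqp.le]
    rfl

/-- Every fraction `p²/(pq-1)` with `p > q ≥ 1` coprime admits a
Hirzebruch–Jung continued fraction expansion obtained from `[4]` by a finite
sequence of the operations `L` and `R`. -/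
theorem hj_tstring (p q : ℕ) (hq : 1 ≤ q) (hqp : q < p) (hco : Nat.Coprime p q) :
    ∃ l : List ℤ, TString l ∧
      hjVal (l.map (fun x : ℤ => (x : ℚ))) =
        (p : ℚ) ^ 2 / ((p : ℚ) * (q : ℚ) - 1) := by
  obtain ⟨l, hT, hl⟩ := exists_tString_hjProd_eq_tStringMatrix p q hq hqp hco
  refine ⟨l, hT, ?_⟩
  rw [hjVal_eq_div hT.two_le, hl]
  simp [tStringMatrix]
end

section
/- Let A be a homology class in a closed 4-manifold X with b⁺(X) > 1, represented by an immersed sphere with p positive double points, satisfying the adjunction equality 2p − 2 = A² + K·A. If SW(K) ≠ 0, K·A ≤ −1, and A² ≥ 0, then SW(K − 2mA) ≠ 0 for all nonnegative integers m; combined with finiteness of basic classes this is a contradiction, hence A² = −1 and K·A = −1. -/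
/-!
Along the classes `L = K - 2mA` the pairing `L·A = K·A - 2m A²` stays negative once `A² ≥ 0`.
Since `K·A < 0`, the adjunction equality turns the first alternative of the Fintushel–Stern
theorem into `|L·A| ≤ K·A < 0`, which is absurd, so each `SW(L) ≠ 0` forces `SW(L - 2A) ≠ 0`.
The classes `K - 2mA` are pairwise distinct (pair them with `K` on the left), contradicting
finiteness of the basic classes; hence `A² < 0`, and the adjunction equality with `p ≥ 0` pins
down `A² = K·A = -1`.
-/

section

variable {H : Type*} [AddCommGroup H] [Module ℤ H]

/-- The conclusion of the Fintushel–Stern theorem for the class `A` of an immersed sphere with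
`p` positive double points. -/
def FintushelStern (B : H →ₗ[ℤ] H →ₗ[ℤ] ℤ) (SW : H → Prop) (A : H) (p : ℕ) : Prop :=
  ∀ L : H, SW L → B L A ≤ 0 → (B A A + |B L A| ≤ 2 * (p : ℤ) - 2 ∨ SW (L - (2 : ℤ) • A))

theorem zsmul_left_injective_of_apply_ne_zero {A : H} (f : H →ₗ[ℤ] ℤ) (hA : f A ≠ 0) :
    Function.Injective fun n : ℤ => n • A := by
  intro m n h
  have hf : m * f A = n * f A := by simpa using congrArg f h
  exact mul_right_cancel₀ hA hf

namespace FintushelStern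

variable {B : H →ₗ[ℤ] H →ₗ[ℤ] ℤ} {SW : H → Prop} {K A : H} {p : ℕ}

theorem sub_two_smul (hFS : FintushelStern B SW A p) (hadj : 2 * (p : ℤ) - 2 = B A A + B K A)
    (hKA : B K A < 0) {L : H} (hL : SW L) (hLA : B L A ≤ 0) : SW (L - (2 : ℤ) • A) := by
  refine (hFS L hL hLA).resolve_left fun h => ?_
  have := abs_nonneg (B L A)
  omega

theorem sub_two_mul_smul (hFS : FintushelStern B SW A p)
    (hadj : 2 * (p : ℤ) - 2 = B A A + B K A) (hKA : B K A < 0) (hK : SW K) (hAA : 0 ≤ B A A) :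
    ∀ m : ℕ, SW (K - (2 * (m : ℤ)) • A)
  | 0 => by simpa using hK
  | m + 1 => by
    have hLA : B (K - (2 * (m : ℤ)) • A) A = B K A - 2 * m * B A A := by simp
    have hstep := hFS.sub_two_smul hadj hKA (sub_two_mul_smul hFS hadj hKA hK hAA m)
      (by rw [hLA]; nlinarith)
    rw [sub_sub, ← add_zsmul] at hstep
    convert hstep using 3
    push_cast
    ring

end FintushelStern

end

theorem sw_induction_general (H : Type*) [AddCommGroup H] [Module ℤ H]
    (B : H →ₗ[ℤ] H →ₗ[ℤ] ℤ) (SW : H → Prop) (K A : H) (p : ℕ)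
    (hFS : ∀ L : H, SW L → B L A ≤ 0 →
      (B A A + |B L A| ≤ 2 * (p : ℤ) - 2 ∨ SW (L - (2 : ℤ) • A)))
    (hfin : {L : H | SW L}.Finite)
    (hadj : 2 * (p : ℤ) - 2 = B A A + B K A)
    (hSWK : SW K) (hKA : B K A ≤ -1) :
    (0 ≤ B A A → ∀ m : ℕ, SW (K - (2 * (m : ℤ)) • A)) ∧
      B A A = -1 ∧ B K A = -1 := by
  have hKA_neg : B K A < 0 := by omega
  have hmain : 0 ≤ B A A → ∀ m : ℕ, SW (K - (2 * (m : ℤ)) • A) :=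
    FintushelStern.sub_two_mul_smul hFS hadj hKA_neg hSWK
  have hAA : B A A < 0 := by
    by_contra! hAA
    have hinj : Function.Injective fun m : ℕ => K - (2 * (m : ℤ)) • A :=
      (sub_right_injective.comp (zsmul_left_injective_of_apply_ne_zero (B K) hKA_neg.ne)).comp
        fun m n h => by simpa using h
    exact Set.infinite_of_injective_forall_mem hinj (hmain hAA) hfin
  exact ⟨hmain, by omega, by omega⟩

/-- The inductive Seiberg–Witten argument of Corollary `rat`.  Axiomatized
data: `H` is the second cohomology lattice of a closed 4-manifold `X` with
`b⁺(X) > 1`, `B` the intersection pairing, `SW L` the predicate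
"`SW_X(L) ≠ 0`", `K` the canonical class, `A ≠ 0` a class represented by an
immersed sphere with `p` positive double points.  Hypotheses: the
Fintushel–Stern theorem `hFS` (for `L` with `SW L ≠ 0` and `L·A ≤ 0`, either
`2p - 2 ≥ A² + |L·A|` or `SW (L - 2A) ≠ 0`), finiteness of the set of basic
classes `hfin`, the adjunction equality `2p - 2 = A² + K·A`, `SW K ≠ 0`, and
`K·A ≤ -1`.  Conclusion: if `A² ≥ 0` then `SW (K - 2mA) ≠ 0` for every
`m ≥ 0` (which contradicts finiteness), hence in fact `A² = -1` and
`K·A = -1`. -/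
theorem sw_induction (H : Type*) [AddCommGroup H] [Module ℤ H]
    [NoZeroSMulDivisors ℤ H]
    (B : H →ₗ[ℤ] H →ₗ[ℤ] ℤ) (SW : H → Prop) (K A : H) (p : ℕ)
    (hA : A ≠ 0)
    (hFS : ∀ L : H, SW L → B L A ≤ 0 →
      (B A A + |B L A| ≤ 2 * (p : ℤ) - 2 ∨ SW (L - (2 : ℤ) • A)))
    (hfin : {L : H | SW L}.Finite)
    (hadj : 2 * (p : ℤ) - 2 = B A A + B K A)
    (hSWK : SW K) (hKA : B K A ≤ -1) :
    (0 ≤ B A A → ∀ m : ℕ, SW (K - (2 * (m : ℤ)) • A)) ∧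
      B A A = -1 ∧ B K A = -1 :=
  sw_induction_general H B SW K A p hFS hfin hadj hSWK hKA
end

section
/- Combinatorial blow-down bound: suppose F_1,...,F_n is a chain of rational curve classes forming an exceptional curve of the first kind, with a single (−1)-component F_i for some 2 ≤ i ≤ n−1, and S is a rational curve class meeting F_i once transversely and disjoint from the other F_j. If every rational curve class T arising after the blow-downs satisfies K·T ≥ −1, then after blowing down the whole chain the image T of S satisfies K·T ≤ K·S − 2(n−1); consequently n ≤ (K·S + 3)/2. -/
set_option maxHeartbeats 2000000

/-- The inductive invariant for the blow-down process: after `k ≥ 1` blow-downs,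
the contracted classes form an interval `[l,r]` containing `i`; the remaining
classes still form a chain (with `l-1` and `r+1` now adjacent), `S` meets only
the two boundary classes `l-1` and `r+1`, with multiplicities `α` and `β`, and
the canonical degrees of non-boundary remaining classes are unchanged. -/
def BInv (n i : ℕ) (ord : ℕ → ℕ) (Q : ℕ → ℕ → ℕ → ℤ) (κ : ℕ → ℕ → ℤ)
    (k l r : ℕ) (α β : ℤ) : Prop :=
  1 ≤ l ∧ l ≤ i ∧ i ≤ r ∧ r ≤ n ∧ r + 1 = l + k ∧ 1 ≤ α ∧ 1 ≤ β ∧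
  (∀ t, t < k → l ≤ ord t ∧ ord t ≤ r) ∧
  (∀ a, l ≤ a → a ≤ r → ∃ t, t < k ∧ ord t = a) ∧
  (2 ≤ l → Q k 0 (l - 1) = α) ∧
  (r < n → Q k 0 (r + 1) = β) ∧
  (∀ b, 1 ≤ b → b ≤ n → (b < l ∨ r < b) → b + 1 ≠ l → b ≠ r + 1 → Q k 0 b = 0) ∧
  (∀ a, 1 ≤ a → a + 2 ≤ l → Q k a (a + 1) = 1) ∧
  (∀ a, r < a → a < n → Q k a (a + 1) = 1) ∧
  (2 ≤ l → r < n → Q k (l - 1) (r + 1) = 1) ∧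
  (∀ a b, 1 ≤ a → (a < l ∨ r < a) → (b < l ∨ r < b) → b ≤ n → a + 1 < b →
      ¬(a + 1 = l ∧ b = r + 1) → Q k a b = 0) ∧
  (∀ a, 1 ≤ a → a ≤ n → (a < l ∨ r < a) → a + 1 ≠ l → a ≠ r + 1 → κ k a = κ 0 a)

/-- Combinatorial blow-down bound (Lemma `iteratedblowdowns` of the paper).

Model: indices `1,…,n` are the chain components `F₁,…,Fₙ` and index `0` is
the extra rational curve class `S`.  `Q k a b` is the intersection number of
(the images of) classes `a` and `b` after `k` blow-downs, and `κ k a` is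
`K · a` after `k` blow-downs; blowing down the `-1`-class `e = ord k` updates
them by `Q' a b = Q a b + (Q a e)(Q b e)` and `κ' a = κ a + (Q a e)(κ e)`
(with `κ e = -1`).  The chain `F₁,…,Fₙ` is an exceptional curve of the first
kind: it is fully contracted by the (injective, exhaustive) sequence `ord` of
blow-downs, each step contracting a class which is at that stage a
`-1`-sphere (`hvalid`).  Initially the `Fⱼ` form a chain
(`F_j · F_{j+1} = 1`, other pairwise intersections `0`), with a single
`-1`-sphere `F_i`, `i ∈ {2,…,n-1}` (the other components are embedded
spheres, so `K·Fⱼ = -2 - Fⱼ² ≥ 0` for `j ≠ i`), and `S` meets `F_i` once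
transversely and no other component.

If the final image `T` of `S` satisfies `K·T ≥ -1` (Corollary `rat`), then
`K·T ≤ K·S - 2(n-1)`; consequently `n ≤ (K·S + 3)/2`. -/
theorem iterated_blowdown_bound (n : ℕ) (hn : 3 ≤ n)
    (i : ℕ) (hi1 : 2 ≤ i) (hi2 : i ≤ n - 1)
    (ord : ℕ → ℕ)
    (hordmem : ∀ k < n, 1 ≤ ord k ∧ ord k ≤ n)
    (hordinj : ∀ k < n, ∀ k' < n, ord k = ord k' → k = k')
    (Q : ℕ → ℕ → ℕ → ℤ) (κ : ℕ → ℕ → ℤ)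
    (hsymm : ∀ a b, Q 0 a b = Q 0 b a)
    (hchain : ∀ a, 1 ≤ a → a < n → Q 0 a (a + 1) = 1)
    (hchain0 : ∀ a b, 1 ≤ a → a ≤ n → 1 ≤ b → b ≤ n → a + 1 < b → Q 0 a b = 0)
    (hSi : Q 0 0 i = 1)
    (hS0 : ∀ b, 1 ≤ b → b ≤ n → b ≠ i → Q 0 0 b = 0)
    (hadj : ∀ a, 1 ≤ a → a ≤ n → Q 0 a a = -2 - κ 0 a)
    (hκpos : ∀ a, 1 ≤ a → a ≤ n → a ≠ i → 0 ≤ κ 0 a)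
    (hκi : κ 0 i = -1)
    (hQrec : ∀ k < n, ∀ a b,
      Q (k + 1) a b = Q k a b + Q k a (ord k) * Q k b (ord k))
    (hκrec : ∀ k < n, ∀ a,
      κ (k + 1) a = κ k a + Q k a (ord k) * κ k (ord k))
    (hvalid : ∀ k < n, Q k (ord k) (ord k) = -1 ∧ κ k (ord k) = -1)
    (hfinal : -1 ≤ κ n 0) :
    κ n 0 ≤ κ 0 0 - 2 * ((n : ℤ) - 1) ∧ 2 * (n : ℤ) ≤ κ 0 0 + 3 := by
  -- symmetry of all the intersection forms
  have hsym : ∀ k, k ≤ n → ∀ a b, Q k a b = Q k b a := by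
    intro k
    induction k with
    | zero => intro _ a b; exact hsymm a b
    | succ k ih =>
      intro hk a b
      rw [hQrec k (by omega) a b, hQrec k (by omega) b a, ih (by omega) a b]
      ring
  -- the main downward induction
  have main : ∀ d : ℕ, ∀ k l r : ℕ, ∀ α β : ℤ, k + d = n →
      BInv n i ord Q κ k l r α β →
      κ n 0 ≤ κ k 0 - (α * ((l : ℤ) - 1) + β * ((n : ℤ) - (r : ℤ)) +
        min α β * (((l : ℤ) - 1) * ((n : ℤ) - (r : ℤ)))) := by
    intro d
    induction d with
    | zero =>
      intro k l r α β hkd inv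
      obtain ⟨hl1, hli, hir, hrn, hlk, -⟩ := inv
      have hk : k = n := by omega
      have hl : l = 1 := by omega
      have hr : r = n := by omega
      have h1 : ((l : ℕ) : ℤ) - 1 = 0 := by omega
      have h2 : (n : ℤ) - (r : ℤ) = 0 := by omega
      rw [hk, h1, h2]
      simp
    | succ d ih =>
      intro k l r α β hkd inv
      obtain ⟨hl1, hli, hir, hrn, hlk, hα, hβ, hmem, hsurj, hA1, hA2, hA3,
        hB1, hB2, hB3, hB4, hC⟩ := inv
      have hkn : k < n := by omega
      have hQk := hQrec k hkn
      have hκk := hκrec k hkn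
      have hsymk : ∀ a b, Q k a b = Q k b a := hsym k (le_of_lt hkn)
      obtain ⟨he1, hen⟩ := hordmem k hkn
      have hκe : κ k (ord k) = -1 := (hvalid k hkn).2
      -- the contracted class is fresh
      have he_not : ¬(l ≤ ord k ∧ ord k ≤ r) := by
        rintro ⟨h1, h2⟩
        obtain ⟨t, ht, hte⟩ := hsurj (ord k) h1 h2
        have := hordinj k hkn t (by omega) hte.symm
        omega
      have he_side : ord k < l ∨ r < ord k := by omega
      -- the contracted class must be a boundary class
      have he_case : ord k + 1 = l ∨ ord k = r + 1 := by
        by_contra h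
        push_neg at h
        have h1 := hC (ord k) he1 hen he_side h.1 h.2
        have h2 : ord k ≠ i := by omega
        have h3 := hκpos (ord k) he1 hen h2
        omega
      rcases he_case with hel | her
      · -- contract the left boundary class `l - 1`
        have h2l : 2 ≤ l := by omega
        have heq : ord k = l - 1 := by omega
        rw [heq] at hQk hκk hκe
        have hQ0e : Q k 0 (l - 1) = α := hA1 h2l
        -- intersections with the contracted class vanish away from its neighbours
        have hzero : ∀ b, 1 ≤ b → b ≤ n → (b < l - 1 ∨ r < b) → b + 1 ≠ l - 1 →
            b ≠ r + 1 → Q k b (l - 1) = 0 := by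
          intro b hb1 hbn hside hbl hbr
          rcases hside with h | h
          · exact hB4 b (l - 1) hb1 (Or.inl (by omega)) (Or.inl (by omega))
              (by omega) (by omega) (by omega)
          · rw [hsymk]
            exact hB4 (l - 1) b (by omega) (Or.inl (by omega)) (Or.inr h) hbn
              (by omega) (by omega)
        have hadjl : 2 ≤ l - 1 → Q k (l - 1 - 1) (l - 1) = 1 := by
          intro h2e
          have := hB1 (l - 2) (by omega) (by omega)
          rw [show l - 2 + 1 = l - 1 by omega] at this
          rw [show l - 1 - 1 = l - 2 by omega]
          exact this
        have hcross : r < n → Q k (r + 1) (l - 1) = 1 := by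
          intro h
          rw [hsymk]
          exact hB3 h2l h
        -- the new invariant
        have inv' : BInv n i ord Q κ (k + 1) (l - 1) r α (α + β) := by
          refine ⟨by omega, by omega, hir, hrn, by omega, hα, by linarith,
            ?_, ?_, ?_, ?_, ?_, ?_, ?_, ?_, ?_, ?_⟩
          · intro t ht
            rcases Nat.lt_or_ge t k with h | h
            · have := hmem t h; omega
            · have : t = k := by omega
              subst this; omega
          · intro a ha1 ha2
            rcases Nat.eq_or_lt_of_le ha1 with h | h
            · exact ⟨k, by omega, by omega⟩
            · obtain ⟨t, ht, hte⟩ := hsurj a (by omega) ha2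
              exact ⟨t, by omega, hte⟩
          · -- A1'
            intro h2e
            rw [hQk, hQ0e, hadjl h2e,
              hA3 (l - 1 - 1) (by omega) (by omega) (Or.inl (by omega))
                (by omega) (by omega)]
            ring
          · -- A2'
            intro hrn'
            rw [hQk, hA2 hrn', hQ0e, hcross hrn']
            ring
          · -- A3'
            intro b hb1 hbn hside hbl hbr
            rw [hQk, hA3 b hb1 hbn (by omega) (by omega) hbr,
              hzero b hb1 hbn hside hbl hbr]
            ring
          · -- B1'
            intro a ha1 ha2
            rw [hQk, hB1 a ha1 (by omega),
              hzero a ha1 (by omega) (Or.inl (by omega)) (by omega) (by omega)]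
            ring
          · -- B2'
            intro a har han
            rw [hQk, hB2 a har han]
            have hz : Q k a (l - 1) * Q k (a + 1) (l - 1) = 0 := by
              rcases (show a = r + 1 ∨ r + 1 < a by omega) with h | h
              · exact mul_eq_zero.mpr (Or.inr
                  (hzero (a + 1) (by omega) (by omega) (Or.inr (by omega))
                    (by omega) (by omega)))
              · exact mul_eq_zero.mpr (Or.inl
                  (hzero a (by omega) (by omega) (Or.inr (by omega))
                    (by omega) (by omega)))
            rw [hz]
            ring
          · -- B3'
            intro h2e hrn'
            rw [hQk, hadjl h2e, hcross hrn',
              hB4 (l - 1 - 1) (r + 1) (by omega) (Or.inl (by omega))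
                (Or.inr (by omega)) (by omega) (by omega) (by omega)]
            ring
          · -- B4'
            intro a b ha1 hsa hsb hbn hab hexcl
            rw [hQk, hB4 a b ha1 (by omega) (by omega) hbn hab (by omega)]
            have hz : Q k a (l - 1) * Q k b (l - 1) = 0 := by
              rcases hsa with ha | ha
              · by_cases h : a + 1 = l - 1
                · refine mul_eq_zero.mpr (Or.inr
                    (hzero b (by omega) hbn ?_ (by omega) (by omega)))
                  omega
                · exact mul_eq_zero.mpr (Or.inl
                    (hzero a ha1 (by omega) (Or.inl ha) h (by omega)))
              · exact mul_eq_zero.mpr (Or.inr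
                  (hzero b (by omega) hbn (Or.inr (by omega)) (by omega)
                    (by omega)))
            rw [hz]
            ring
          · -- C'
            intro a ha1 han hside hal har
            rw [hκk, hzero a ha1 han hside hal har,
              hC a ha1 han (by omega) (by omega) har]
            ring
        have IH := ih (k + 1) (l - 1) r α (α + β) (by omega) inv'
        have hκ10 : κ (k + 1) 0 = κ k 0 - α := by
          rw [hκk 0, hQ0e, hκe]; ring
        rw [hκ10] at IH
        have hcast : ((l - 1 : ℕ) : ℤ) = (l : ℤ) - 1 := by omega
        rw [hcast] at IH
        have hminA : min α (α + β) = α := min_eq_left (by linarith)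
        rw [hminA] at IH
        have hLpos : (1 : ℤ) ≤ (l : ℤ) - 1 := by omega
        have hRpos : (0 : ℤ) ≤ (n : ℤ) - (r : ℤ) := by omega
        have hmin : min α β ≤ α := min_le_left α β
        nlinarith [mul_nonneg (mul_nonneg (sub_nonneg.mpr hmin)
          (by linarith : (0 : ℤ) ≤ (l : ℤ) - 1)) hRpos]
      · -- contract the right boundary class `r + 1`
        have hrln : r < n := by omega
        rw [her] at hQk hκk hκe
        have hQ0e : Q k 0 (r + 1) = β := hA2 hrln
        have hzero : ∀ b, 1 ≤ b → b ≤ n → (b < l ∨ r + 1 < b) → b + 1 ≠ l →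
            b ≠ r + 2 → Q k b (r + 1) = 0 := by
          intro b hb1 hbn hside hbl hbr
          rcases hside with h | h
          · exact hB4 b (r + 1) hb1 (Or.inl h) (Or.inr (by omega)) (by omega)
              (by omega) (by omega)
          · rw [hsymk]
            exact hB4 (r + 1) b (by omega) (Or.inr (by omega)) (Or.inr (by omega))
              hbn (by omega) (by omega)
        have hadjr : r + 1 < n → Q k (r + 2) (r + 1) = 1 := by
          intro h
          rw [hsymk]
          exact hB2 (r + 1) (by omega) (by omega)
        have hcross : 2 ≤ l → Q k (l - 1) (r + 1) = 1 := fun h2l => hB3 h2l hrln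
        have inv' : BInv n i ord Q κ (k + 1) l (r + 1) (α + β) β := by
          refine ⟨hl1, hli, by omega, by omega, by omega, by linarith, hβ,
            ?_, ?_, ?_, ?_, ?_, ?_, ?_, ?_, ?_, ?_⟩
          · intro t ht
            rcases Nat.lt_or_ge t k with h | h
            · have := hmem t h; omega
            · have : t = k := by omega
              subst this; omega
          · intro a ha1 ha2
            rcases Nat.eq_or_lt_of_le ha2 with h | h
            · exact ⟨k, by omega, by omega⟩
            · obtain ⟨t, ht, hte⟩ := hsurj a ha1 (by omega)
              exact ⟨t, by omega, hte⟩
          · -- A1'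
            intro h2l
            rw [hQk, hA1 h2l, hQ0e, hcross h2l]
            ring
          · -- A2'
            intro hr'
            rw [hQk, hQ0e, hadjr hr',
              hA3 (r + 2) (by omega) (by omega) (Or.inr (by omega)) (by omega)
                (by omega)]
            ring
          · -- A3'
            intro b hb1 hbn hside hbl hbr
            rw [hQk, hA3 b hb1 hbn (by omega) hbl (by omega),
              hzero b hb1 hbn hside hbl hbr]
            ring
          · -- B1'
            intro a ha1 ha2
            rw [hQk, hB1 a ha1 ha2,
              hzero a ha1 (by omega) (Or.inl (by omega)) (by omega) (by omega)]
            ring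
          · -- B2'
            intro a har han
            rw [hQk, hB2 a (by omega) han]
            have hz : Q k a (r + 1) * Q k (a + 1) (r + 1) = 0 := by
              rcases (show a = r + 2 ∨ r + 2 < a by omega) with h | h
              · exact mul_eq_zero.mpr (Or.inr
                  (hzero (a + 1) (by omega) (by omega) (Or.inr (by omega))
                    (by omega) (by omega)))
              · exact mul_eq_zero.mpr (Or.inl
                  (hzero a (by omega) (by omega) (Or.inr (by omega))
                    (by omega) (by omega)))
            rw [hz]
            ring
          · -- B3'
            intro h2l hr'
            rw [hQk, hcross h2l, hadjr hr',
              hB4 (l - 1) (r + 2) (by omega) (Or.inl (by omega))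
                (Or.inr (by omega)) (by omega) (by omega) (by omega)]
            ring
          · -- B4'
            intro a b ha1 hsa hsb hbn hab hexcl
            rw [hQk, hB4 a b ha1 (by omega) (by omega) hbn hab (by omega)]
            have hz : Q k a (r + 1) * Q k b (r + 1) = 0 := by
              rcases hsb with hb | hb
              · -- both a and b on the left of l
                refine mul_eq_zero.mpr (Or.inl
                  (hzero a ha1 (by omega) (Or.inl (by omega)) (by omega)
                    (by omega)))
              · by_cases h : b = r + 2
                · -- then a is not adjacent to the cross pair
                  refine mul_eq_zero.mpr (Or.inl
                    (hzero a ha1 (by omega) ?_ (by omega) (by omega)))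
                  omega
                · exact mul_eq_zero.mpr (Or.inr
                    (hzero b (by omega) hbn (Or.inr hb) (by omega) h))
            rw [hz]
            ring
          · -- C'
            intro a ha1 han hside hal har
            rw [hκk, hzero a ha1 han hside hal har,
              hC a ha1 han (by omega) hal (by omega)]
            ring
        have IH := ih (k + 1) l (r + 1) (α + β) β (by omega) inv'
        have hκ10 : κ (k + 1) 0 = κ k 0 - β := by
          rw [hκk 0, hQ0e, hκe]; ring
        rw [hκ10] at IH
        have hcast : ((r + 1 : ℕ) : ℤ) = (r : ℤ) + 1 := by omega
        rw [hcast] at IH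
        have hminB : min (α + β) β = β := min_eq_right (by linarith)
        rw [hminB] at IH
        have hLpos : (0 : ℤ) ≤ (l : ℤ) - 1 := by omega
        have hRpos : (1 : ℤ) ≤ (n : ℤ) - (r : ℤ) := by omega
        have hmin : min α β ≤ β := min_le_right α β
        nlinarith [mul_nonneg (mul_nonneg (sub_nonneg.mpr hmin) hLpos)
          (by linarith : (0 : ℤ) ≤ (n : ℤ) - (r : ℤ))]
  -- the first blow-down must contract `F_i`
  have h0n : 0 < n := by omega
  obtain ⟨ho1, ho2⟩ := hordmem 0 h0n
  have hκ00 : κ 0 (ord 0) = -1 := (hvalid 0 h0n).2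
  have hord0 : ord 0 = i := by
    by_contra h
    have := hκpos (ord 0) ho1 ho2 h
    omega
  have hQ0 := hQrec 0 h0n
  have hκ0r := hκrec 0 h0n
  rw [hord0] at hQ0 hκ0r hκ00
  have hin : i < n := by omega
  -- basic intersection facts with `F_i`
  have hQ0i : ∀ b, 1 ≤ b → b ≤ n → b + 1 ≠ i → b ≠ i → b ≠ i + 1 →
      Q 0 b i = 0 := by
    intro b hb1 hbn h1 h2 h3
    rcases (show b + 1 < i ∨ i + 1 < b by omega) with h | h
    · exact hchain0 b i hb1 hbn (by omega) (by omega) h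
    · rw [hsymm]
      exact hchain0 i b (by omega) (by omega) hb1 hbn h
  have hQm1 : Q 0 (i - 1) i = 1 := by
    have := hchain (i - 1) (by omega) (by omega)
    rwa [show i - 1 + 1 = i by omega] at this
  have hQp1 : Q 0 (i + 1) i = 1 := by
    rw [hsymm]
    exact hchain i (by omega) hin
  -- the invariant after the first blow-down
  have inv1 : BInv n i ord Q κ 1 i i 1 1 := by
    refine ⟨by omega, le_refl i, le_refl i, by omega, rfl, le_refl 1, le_refl 1,
      ?_, ?_, ?_, ?_, ?_, ?_, ?_, ?_, ?_, ?_⟩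
    · intro t ht
      have : t = 0 := by omega
      subst this
      omega
    · intro a ha1 ha2
      exact ⟨0, by omega, by omega⟩
    · intro h2i
      rw [hQ0, hS0 (i - 1) (by omega) (by omega) (by omega), hSi, hQm1]
      ring
    · intro hin'
      rw [hQ0, hS0 (i + 1) (by omega) (by omega) (by omega), hSi, hQp1]
      ring
    · intro b hb1 hbn hside hbl hbr
      rw [hQ0, hS0 b hb1 hbn (by omega), hSi,
        hQ0i b hb1 hbn hbl (by omega) hbr]
      ring
    · intro a ha1 ha2
      rw [hQ0, hchain a ha1 (by omega),
        hQ0i a ha1 (by omega) (by omega) (by omega) (by omega)]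
      ring
    · intro a har han
      rw [hQ0, hchain a (by omega) han]
      have hz : Q 0 a i * Q 0 (a + 1) i = 0 := by
        rcases (show a = i + 1 ∨ i + 1 < a by omega) with h | h
        · exact mul_eq_zero.mpr (Or.inr
            (hQ0i (a + 1) (by omega) (by omega) (by omega) (by omega)
              (by omega)))
        · exact mul_eq_zero.mpr (Or.inl
            (hQ0i a (by omega) (by omega) (by omega) (by omega) (by omega)))
      rw [hz]
      ring
    · intro h2i hin'
      rw [hQ0, hchain0 (i - 1) (i + 1) (by omega) (by omega) (by omega)
        (by omega) (by omega), hQm1, hQp1]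
      ring
    · intro a b ha1 hsa hsb hbn hab hexcl
      rw [hQ0, hchain0 a b ha1 (by omega) (by omega) hbn hab]
      have hz : Q 0 a i * Q 0 b i = 0 := by
        by_cases h1 : a + 1 = i
        · exact mul_eq_zero.mpr (Or.inr
            (hQ0i b (by omega) hbn (by omega) (by omega) (by omega)))
        · by_cases h2 : a = i + 1
          · exact mul_eq_zero.mpr (Or.inr
              (hQ0i b (by omega) hbn (by omega) (by omega) (by omega)))
          · exact mul_eq_zero.mpr (Or.inl
              (hQ0i a ha1 (by omega) h1 (by omega) h2))
      rw [hz]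
      ring
    · intro a ha1 han hside hal har
      rw [hκ0r, hQ0i a ha1 han hal (by omega) har]
      ring
  have hb := main (n - 1) 1 i i 1 1 (by omega) inv1
  have hκ1 : κ 1 0 = κ 0 0 - 1 := by
    rw [hκ0r 0, hSi, hκ00]; ring
  rw [hκ1, min_self] at hb
  have hL : (1 : ℤ) ≤ (i : ℤ) - 1 := by omega
  have hR : (1 : ℤ) ≤ (n : ℤ) - (i : ℤ) := by omega
  have part1 : κ n 0 ≤ κ 0 0 - 2 * ((n : ℤ) - 1) := by
    nlinarith [mul_nonneg (by linarith : (0 : ℤ) ≤ (i : ℤ) - 1 - 1)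
      (by linarith : (0 : ℤ) ≤ (n : ℤ) - (i : ℤ) - 1)]
  exact ⟨part1, by linarith⟩
end
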